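/- Define W := {u ∈ 𝔰^⊥ ∩ 𝔭 : ⁅u, y⁆ = 0}. Then 𝔭 is the internal direct sum of W and 𝔰^{(0)} + ⁅x, 𝔤_+⁆, and W is 𝔰^{(0)}-invariant: ⁅u, W⁆ ⊆ W for every u ∈ 𝔰^{(0)}. In other words, W is an 𝔰^{(0)}-invariant graded complement to 𝔰^{(0)} + ⁅x, 𝔤_+⁆ in 𝔭. -/

import Mathlib

/-!
Since `⁅𝔰_i, 𝔰_j⁆ ⊆ 𝔰_{i+j}`, `𝔰` is a subalgebra containing `x` and `y`, and since the Killing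
form pairs `𝔤_i` only with `𝔤_{-i}`, its nondegeneracy on `𝔰` forces `𝔰_i ⊆ K·y` for `i ≥ 1`.
Thus `𝔤 = 𝔰 ⊕ 𝔰^⊥` with both summands stable under `ad x` and `ad y`, while `sl₂`-theory for
the nilpotent operators `ad y`, `ad x` gives `𝔤 = ker (ad y) ⊕ im (ad x)`. Together,
`𝔤 = 𝔰 ⊕ (𝔰^⊥ ∩ ker (ad y)) ⊕ ⁅x, 𝔰^⊥⁆`, and projecting onto the degrees `i ≥ 0` (all these
subspaces are graded) decomposes `𝔭`. Invariance of `W` follows from `⁅𝔰^{(0)}, y⁆ ⊆ K·y` and the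
invariance of the Killing form.
-/

/-- `sAux 0 = 𝔰_{-1} = K·x`, `sAux (n+1) = 𝔰_n = {u ∈ 𝔤_n : ⁅x,u⁆ ∈ 𝔰_{n-1}}`. -/
noncomputable def sAux {K L : Type*} [Field K] [LieRing L] [LieAlgebra K L]
    (g : ℤ → Submodule K L) (x : L) : ℕ → Submodule K L
  | 0 => Submodule.span K {x}
  | (n + 1) => g (n : ℤ) ⊓ (sAux g x n).comap (LieAlgebra.ad K L x)

/-- The subspaces `𝔰_i ⊆ 𝔤_i`. -/
noncomputable def sFun {K L : Type*} [Field K] [LieRing L] [LieAlgebra K L]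
    (g : ℤ → Submodule K L) (x : L) (i : ℤ) : Submodule K L :=
  if i < -1 then ⊥ else sAux g x (i + 1).toNat

/-- The orthogonal complement `{u ∈ L : B(u, s) = 0 for all s ∈ S}` of a subspace `S`
with respect to a bilinear form `B`. -/
def perpOf {K L : Type*} [Field K] [AddCommGroup L] [Module K L]
    (B : LinearMap.BilinForm K L) (S : Submodule K L) : Submodule K L where
  carrier := {u : L | ∀ s ∈ S, B u s = 0}
  zero_mem' := by intro s hs; simp
  add_mem' := by
    intro a b ha hb s hs
    rw [map_add, LinearMap.add_apply, ha s hs, hb s hs, add_zero]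
  smul_mem' := by
    intro c a ha s hs
    rw [map_smul, LinearMap.smul_apply, ha s hs, smul_zero]

/-- The subspace `{u ∈ L : ⁅u, y⁆ = 0}`. -/
def kerRight {K L : Type*} [Field K] [LieRing L] [LieAlgebra K L] (y : L) :
    Submodule K L where
  carrier := {u : L | ⁅u, y⁆ = 0}
  zero_mem' := by simp
  add_mem' := by intro a b ha hb; rw [Set.mem_setOf_eq, add_lie, ha, hb, add_zero]
  smul_mem' := by intro c a ha; rw [Set.mem_setOf_eq, smul_lie, ha, smul_zero]

section Sl2Operators

open Polynomial

variable {K V : Type*} [Field K] [AddCommGroup V] [Module K V] {e f h : Module.End K V}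

theorem sl2_mul_pow_f (hf : h * f - f * h = (-2 : K) • f) (k : ℕ) :
    h * f ^ k = f ^ k * h - (2 * k : K) • f ^ k := by
  have hf' : h * f = f * h + (-2 : K) • f := by rw [← hf]; abel
  induction k with
  | zero => simp
  | succ n ih =>
    rw [pow_succ, ← mul_assoc, ih, sub_mul, smul_mul_assoc, mul_assoc, hf', mul_add,
      mul_smul_comm, ← mul_assoc]
    push_cast
    module

theorem sl2_e_mul_pow_f (hc : e * f - f * e = h) (hf : h * f - f * h = (-2 : K) • f) (k : ℕ) :
    e * f ^ (k + 1) = f ^ (k + 1) * e + ((k : K) + 1) • (f ^ k * (h - (k : K) • 1)) := by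
  have hc' : e * f = f * e + h := by rw [← hc]; abel
  have hf' : h * f = f * h + (-2 : K) • f := by rw [← hf]; abel
  induction k with
  | zero => simpa using hc'
  | succ n ih =>
    rw [pow_succ f (n + 1), ← mul_assoc, ih, add_mul, mul_assoc _ e f, hc', smul_mul_assoc,
      mul_assoc (f ^ n), sub_mul, smul_mul_assoc, one_mul, hf']
    simp only [mul_sub, mul_add, mul_smul_comm, mul_one, ← mul_assoc, ← pow_succ]
    push_cast
    module

theorem sl2_smul_add_mul_pow_f (hc : e * f - f * e = h) (hf : h * f - f * h = (-2 : K) • f)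
    (m : ℕ) :
    ((m : K) + 1) • ((h + ((m : K) + 2) • 1) * f ^ (m + 1)) =
      f * e * f ^ (m + 1) - f ^ (m + 2) * e := by
  rw [mul_assoc, sl2_e_mul_pow_f hc hf, add_mul, sl2_mul_pow_f hf, mul_add, mul_smul_comm,
    ← mul_assoc, ← pow_succ', ← mul_assoc, ← pow_succ']
  simp only [mul_sub, mul_smul_comm, mul_one, smul_mul_assoc, one_mul]
  push_cast
  module

theorem sl2_ker_e_le_comap_h (he : h * e - e * h = (2 : K) • e) :
    LinearMap.ker e ≤ (LinearMap.ker e).comap h := by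
  intro v hv
  have he' : e * h = h * e - (2 : K) • e := by rw [← he]; abel
  have := congr($he' v)
  simp only [Module.End.mul_apply, LinearMap.sub_apply, LinearMap.smul_apply,
    LinearMap.mem_ker.mp hv, map_zero, smul_zero, sub_zero] at this
  exact this

variable [CharZero K]

theorem sl2_apply_pow_f_mem_range (hc : e * f - f * e = h) (hf : h * f - f * h = (-2 : K) • f)
    {m : ℕ} {u : V} (hu : e ((f ^ (m + 1)) u) = 0) :
    (h + ((m : K) + 2) • 1) ((f ^ (m + 1)) u) ∈ LinearMap.range (f ^ (m + 2)) := by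
  have hm : (m : K) + 1 ≠ 0 := Nat.cast_add_one_ne_zero m
  have key := congr($(sl2_smul_add_mul_pow_f hc hf m) u)
  simp only [LinearMap.smul_apply, LinearMap.sub_apply, Module.End.mul_apply, hu, map_zero,
    zero_sub] at key
  refine ⟨-((m : K) + 1)⁻¹ • e u, ?_⟩
  rw [map_smul, neg_smul, ← smul_neg, ← key, smul_smul, inv_mul_cancel₀ hm, one_smul]

theorem sl2_aeval_apply_mem_range (hc : e * f - f * e = h) (he : h * e - e * h = (2 : K) • e)
    (hf : h * f - f * h = (-2 : K) • f) {v : V} (hv : v ∈ LinearMap.ker e ⊓ LinearMap.range f)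
    (m : ℕ) :
    aeval h (∏ k ∈ Finset.range m, (X + C ((k : K) + 2))) v ∈ LinearMap.range (f ^ (m + 1)) := by
  induction m with
  | zero => simpa using hv.2
  | succ n ih =>
    obtain ⟨u, hu⟩ := ih
    have hker : e ((f ^ (n + 1)) u) = 0 := by
      rw [hu]
      exact aeval_apply_smul_mem_of_le_comap hv.1 _ h (sl2_ker_e_le_comap_h he)
    have hX : aeval h (X + C ((n : K) + 2)) = h + ((n : K) + 2) • 1 := by
      rw [map_add, aeval_X, aeval_C, Algebra.algebraMap_eq_smul_one]
    rw [Finset.prod_range_succ, mul_comm, map_mul, Module.End.mul_apply, ← hu, hX]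
    exact sl2_apply_pow_f_mem_range hc hf hker

theorem sl2_aeval_apply_eq_zero (hc : e * f - f * e = h) (he : h * e - e * h = (2 : K) • e)
    (hf : h * f - f * h = (-2 : K) • f) (k : ℕ) {v : V} (hev : e v = 0) (hfv : (f ^ k) v = 0) :
    aeval h (∏ i ∈ Finset.range k, (X - C (i : K))) v = 0 := by
  induction k generalizing v with
  | zero => simpa using hfv
  | succ k ih =>
    set w := (h - (k : K) • 1) v
    have hew : e w = 0 := by simpa [w, hev] using sl2_ker_e_le_comap_h he hev
    have hfw : (f ^ k) w = 0 := by
      have key := congr($(sl2_e_mul_pow_f hc hf k) v)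
      simp only [Module.End.mul_apply, LinearMap.add_apply, LinearMap.smul_apply, hfv, hev,
        map_zero, zero_add] at key
      exact (smul_eq_zero.mp key.symm).resolve_left (Nat.cast_add_one_ne_zero k)
    have hX : aeval h (X - C (k : K)) = h - (k : K) • 1 := by
      rw [map_sub, aeval_X, aeval_C, Algebra.algebraMap_eq_smul_one]
    rw [Finset.prod_range_succ, map_mul, Module.End.mul_apply, hX]
    exact ih hew hfw

-- On `ker e ⊓ range f`, `h` is annihilated both by `∏ (X - i)` (as `f ^ N = 0`) and by
-- `∏ (X + k + 2)` (pushing `range f` into `range (f ^ (N + 1)) = 0`); these are coprime.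
theorem sl2_disjoint_ker_range (hc : e * f - f * e = h) (he : h * e - e * h = (2 : K) • e)
    (hf : h * f - f * h = (-2 : K) • f) (hnil : IsNilpotent f) :
    Disjoint (LinearMap.ker e) (LinearMap.range f) := by
  obtain ⟨N, hN⟩ := hnil
  refine Submodule.disjoint_def.mpr fun v hker hrange => ?_
  have hP : aeval h (∏ k ∈ Finset.range N, (X + C ((k : K) + 2))) v = 0 := by
    obtain ⟨u, hu⟩ := sl2_aeval_apply_mem_range hc he hf ⟨hker, hrange⟩ N
    rw [← hu, pow_succ, hN, zero_mul, LinearMap.zero_apply]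
  have hQ := sl2_aeval_apply_eq_zero hc he hf N hker (by rw [hN, LinearMap.zero_apply])
  have hcop : IsCoprime (∏ k ∈ Finset.range N, (X + C ((k : K) + 2)))
      (∏ i ∈ Finset.range N, (X - C (i : K))) := by
    refine IsCoprime.prod_left fun k _ => IsCoprime.prod_right fun i _ => ?_
    rw [← sub_neg_eq_add, ← C_neg]
    refine isCoprime_X_sub_C_of_isUnit_sub (sub_ne_zero.mpr fun hki => ?_).isUnit
    have : ((k + i + 2 : ℕ) : K) = 0 := by push_cast; linear_combination -hki
    exact Nat.cast_ne_zero.mpr (by omega) this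
  exact Submodule.disjoint_def.mp (disjoint_ker_aeval_of_isCoprime h hcop) v hP hQ

theorem sl2_isCompl_ker_range [FiniteDimensional K V] (hc : e * f - f * e = h)
    (he : h * e - e * h = (2 : K) • e) (hf : h * f - f * h = (-2 : K) • f)
    (he_nil : IsNilpotent e) (hf_nil : IsNilpotent f) :
    IsCompl (LinearMap.ker e) (LinearMap.range f) := by
  have hdisj' : Disjoint (LinearMap.ker f) (LinearMap.range e) :=
    sl2_disjoint_ker_range (h := -h) (by rw [← hc]; abel)
      (by rw [neg_mul, mul_neg, sub_neg_eq_add, neg_add_eq_sub, ← neg_sub, hf, neg_smul, neg_neg])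
      (by rw [neg_mul, mul_neg, sub_neg_eq_add, neg_add_eq_sub, ← neg_sub, he, neg_smul]) he_nil
  refine (Submodule.isCompl_iff_disjoint _ _ ?_).mpr (sl2_disjoint_ker_range hc he hf hf_nil)
  have := Submodule.finrank_add_finrank_le_of_disjoint hdisj'
  have := LinearMap.finrank_range_add_finrank_ker e
  have := LinearMap.finrank_range_add_finrank_ker f
  omega

end Sl2Operators

namespace DirectSum.IsInternal

variable {ι R M : Type*} [DecidableEq ι] [Semiring R] [AddCommMonoid M] [Module R M]
  {g : ι → Submodule R M} (hg : DirectSum.IsInternal g)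

noncomputable def proj (j : ι) : M →ₗ[R] M :=
  (g j).subtype ∘ₗ DFinsupp.lapply j ∘ₗ
    (LinearEquiv.ofBijective (DirectSum.coeLinearMap g) hg).symm.toLinearMap

theorem proj_mem (j : ι) (u : M) : hg.proj j u ∈ g j := Submodule.coe_mem _

theorem proj_apply_of_mem {j : ι} {u : M} (hu : u ∈ g j) : hg.proj j u = u := by
  change ((LinearEquiv.ofBijective (DirectSum.coeLinearMap g) hg).symm u j : M) = u
  rw [hg.ofBijective_coeLinearMap_of_mem hu]

theorem proj_apply_of_mem_ne {i j : ι} (hij : i ≠ j) {u : M} (hu : u ∈ g i) :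
    hg.proj j u = 0 := by
  change ((LinearEquiv.ofBijective (DirectSum.coeLinearMap g) hg).symm u j : M) = 0
  rw [hg.ofBijective_coeLinearMap_of_mem_ne hij hu, ZeroMemClass.coe_zero]

include hg in
theorem induction_on {C : M → Prop} (zero : C 0) (add : ∀ v w, C v → C w → C (v + w))
    (mem : ∀ i, ∀ u ∈ g i, C u) (u : M) : C u :=
  Submodule.iSup_induction g (motive := C) (hg.submodule_iSup_eq_top ▸ Submodule.mem_top) mem zero
    add

theorem proj_add_apply_of_mapsTo [Add ι] [IsRightCancelAdd ι] {A : M →ₗ[R] M} {c : ι}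
    (hA : ∀ i, ∀ u ∈ g i, A u ∈ g (i + c)) (j : ι) (u : M) :
    hg.proj (j + c) (A u) = A (hg.proj j u) := by
  induction u using hg.induction_on with
  | zero => simp
  | add v w hv hw => simp only [map_add, hv, hw]
  | mem i v hv =>
    by_cases hij : i = j
    · subst hij
      rw [hg.proj_apply_of_mem hv, hg.proj_apply_of_mem (hA i v hv)]
    · rw [hg.proj_apply_of_mem_ne hij hv,
        hg.proj_apply_of_mem_ne (fun h => hij (add_right_cancel h)) (hA i v hv), map_zero]

end DirectSum.IsInternal

section IntGrading

variable {K L : Type*} [Field K] [AddCommGroup L] [Module K L] {g : ℤ → Submodule K L}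

theorem DirectSum.IsInternal.isNilpotent_of_mapsTo_add (hg : DirectSum.IsInternal g)
    (hfin : {i | g i ≠ ⊥}.Finite) {A : Module.End K L} {c : ℤ} (hc : c ≠ 0)
    (hA : ∀ i, ∀ u ∈ g i, A u ∈ g (i + c)) : IsNilpotent A := by
  obtain ⟨lo, hlo⟩ := hfin.bddBelow
  obtain ⟨hi, hhi⟩ := hfin.bddAbove
  have hpow : ∀ (n : ℕ) (i : ℤ), ∀ u ∈ g i, (A ^ n) u ∈ g (i + n * c) := by
    intro n
    induction n with
    | zero => simp
    | succ n ih =>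
      intro i u hu
      rw [pow_succ', Module.End.mul_apply, Nat.cast_succ, add_one_mul, ← add_assoc]
      exact hA _ _ (ih i u hu)
  set N := (hi - lo).toNat + 1
  refine ⟨N, LinearMap.ext fun u => ?_⟩
  induction u using hg.induction_on with
  | zero => simp
  | add v w hv hw => simp only [map_add, hv, hw, LinearMap.zero_apply, add_zero]
  | mem i u hu =>
    by_contra hne
    have hi_mem : g i ≠ ⊥ := fun hbot => hne (by simp_all)
    have hiN_mem : g (i + N * c) ≠ ⊥ := fun hbot => hne (by
      simpa [hbot] using hpow N i u hu)
    have hNc : (N : ℤ) ≤ |(N : ℤ) * c| := by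
      rw [abs_mul, Nat.abs_cast]
      exact le_mul_of_one_le_right (Nat.cast_nonneg N) (Int.one_le_abs hc)
    have : lo ≤ i := hlo hi_mem
    have : i ≤ hi := hhi hi_mem
    have : lo ≤ i + N * c := hlo hiN_mem
    have : i + N * c ≤ hi := hhi hiN_mem
    have hbound : |(N : ℤ) * c| ≤ hi - lo := abs_le.mpr ⟨by linarith, by linarith⟩
    omega

end IntGrading

theorem Submodule.mem_iSup_ge_of_mem {ι R M : Type*} [Preorder ι] [Semiring R] [AddCommMonoid M]
    [Module R M] {p : ι → Submodule R M} {c i : ι} (hci : c ≤ i) {u : M} (hu : u ∈ p i) :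
    u ∈ ⨆ j ≥ c, p j :=
  Submodule.mem_iSup_of_mem i (Submodule.mem_iSup_of_mem hci hu)

theorem iSup_ge_le_iSup_ge {ι α : Type*} [Preorder ι] [CompleteLattice α] {p : ι → α} {a b : ι}
    (hab : a ≤ b) : ⨆ i ≥ b, p i ≤ ⨆ i ≥ a, p i :=
  biSup_mono fun _ hi => hab.trans hi

section LieBilinear

variable {K L : Type*} [Field K] [LieRing L] [LieAlgebra K L]

theorem lie_mem_of_forall_mem_iSup_ge {ι : Type*} [Preorder ι] {p : ι → Submodule K L} {a b : ι}
    {S : Submodule K L} (h : ∀ i ≥ a, ∀ j ≥ b, ∀ u ∈ p i, ∀ v ∈ p j, ⁅u, v⁆ ∈ S) {u v : L}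
    (hu : u ∈ ⨆ i ≥ a, p i) (hv : v ∈ ⨆ j ≥ b, p j) : ⁅u, v⁆ ∈ S := by
  have hleft : ∀ i ≥ a, ∀ u ∈ p i, (⨆ j ≥ b, p j) ≤ S.comap (LieAlgebra.ad K L u) :=
    fun i hi u hu => iSup₂_le fun j hj v hv => h i hi j hj u hu v hv
  suffices (⨆ i ≥ a, p i) ≤ S.comap (LieAlgebra.ad K L v) by
    rw [← lie_skew]
    exact S.neg_mem (this hu)
  refine iSup₂_le fun i hi w hw => ?_
  show ⁅v, w⁆ ∈ S
  rw [← lie_skew]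
  exact S.neg_mem (hleft i hi w hw hv)

variable {g : ℤ → Submodule K L}

theorem lie_mem_iSup_ge (hbr : ∀ i j : ℤ, ∀ u ∈ g i, ∀ v ∈ g j, ⁅u, v⁆ ∈ g (i + j)) {a b : ℤ}
    {u v : L} (hu : u ∈ ⨆ i ≥ a, g i) (hv : v ∈ ⨆ j ≥ b, g j) : ⁅u, v⁆ ∈ ⨆ k ≥ a + b, g k :=
  lie_mem_of_forall_mem_iSup_ge (fun i hi j hj u hu v hv =>
    Submodule.mem_iSup_ge_of_mem (add_le_add hi hj) (hbr i j u hu v hv)) hu hv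

end LieBilinear

section KillingGrading

variable {K L : Type*} [Field K] [LieRing L] [LieAlgebra K L]
  {g : ℤ → Submodule K L} (hg : DirectSum.IsInternal g) (hfin : {i | g i ≠ ⊥}.Finite)
  (hbr : ∀ i j : ℤ, ∀ u ∈ g i, ∀ v ∈ g j, ⁅u, v⁆ ∈ g (i + j))
include hg hfin hbr

theorem killingForm_eq_zero_of_add_ne_zero {i j : ℤ} (hij : i + j ≠ 0) {u v : L} (hu : u ∈ g i)
    (hv : v ∈ g j) : killingForm K L u v = 0 := by
  have hnil : IsNilpotent (LieAlgebra.ad K L u ∘ₗ LieAlgebra.ad K L v) :=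
    hg.isNilpotent_of_mapsTo_add hfin hij fun k w hw => by
      simpa [add_comm, add_left_comm] using hbr i (j + k) u hu _ (hbr j k v hv w hw)
  rw [killingForm_apply_apply]
  exact (LinearMap.isNilpotent_trace_of_isNilpotent hnil).eq_zero

theorem killingForm_proj_apply (j : ℤ) (u v : L) :
    killingForm K L (hg.proj j u) v = killingForm K L u (hg.proj (-j) v) := by
  induction u using hg.induction_on with
  | zero => simp
  | add a b ha hb => simp only [map_add, LinearMap.add_apply, ha, hb]
  | mem i u hu =>
    induction v using hg.induction_on with
    | zero => simp
    | add a b ha hb => simp only [map_add, ha, hb]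
    | mem k v hv =>
      by_cases hij : i = j
      · subst hij
        rw [hg.proj_apply_of_mem hu]
        by_cases hki : k = -i
        · subst hki
          rw [hg.proj_apply_of_mem hv]
        · rw [hg.proj_apply_of_mem_ne hki hv, map_zero,
            killingForm_eq_zero_of_add_ne_zero hg hfin hbr (by omega) hu hv]
      · rw [hg.proj_apply_of_mem_ne hij hu, LinearMap.map_zero₂]
        by_cases hkj : k = -j
        · subst hkj
          rw [hg.proj_apply_of_mem hv,
            killingForm_eq_zero_of_add_ne_zero hg hfin hbr (by omega) hu hv]
        · rw [hg.proj_apply_of_mem_ne hkj hv, map_zero]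

end KillingGrading

section SliceSpaces

variable {K L : Type*} [Field K] [LieRing L] [LieAlgebra K L] {g : ℤ → Submodule K L} {x : L}

theorem mem_sFun_neg_one {u : L} : u ∈ sFun g x (-1) ↔ ∃ a : K, a • x = u := by
  simp [sFun, sAux, Submodule.mem_span_singleton]

theorem sFun_of_lt_neg_one {i : ℤ} (hi : i < -1) : sFun g x i = ⊥ := if_pos hi

theorem mem_sFun_iff {i : ℤ} (hi : 0 ≤ i) {u : L} :
    u ∈ sFun g x i ↔ u ∈ g i ∧ ⁅x, u⁆ ∈ sFun g x (i - 1) := by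
  rw [sFun, sFun, if_neg (by omega), if_neg (by omega), show (i + 1).toNat = (i - 1 + 1).toNat + 1
    by omega, sAux, show (((i - 1 + 1).toNat : ℕ) : ℤ) = i by omega]
  rfl

theorem sFun_le (hx : x ∈ g (-1)) (i : ℤ) : sFun g x i ≤ g i := by
  intro u hu
  rcases lt_trichotomy i (-1) with hi | rfl | hi
  · rw [sFun_of_lt_neg_one hi, Submodule.mem_bot] at hu
    exact hu ▸ zero_mem _
  · obtain ⟨a, rfl⟩ := mem_sFun_neg_one.mp hu
    exact Submodule.smul_mem _ a hx
  · exact ((mem_sFun_iff (by omega)).mp hu).1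

theorem lie_x_mem_sFun {j : ℤ} {v : L} (hv : v ∈ sFun g x j) : ⁅x, v⁆ ∈ sFun g x (j - 1) := by
  rcases lt_trichotomy j (-1) with hj | rfl | hj
  · rw [sFun_of_lt_neg_one hj, Submodule.mem_bot] at hv
    simp [hv]
  · obtain ⟨a, rfl⟩ := mem_sFun_neg_one.mp hv
    simp
  · exact ((mem_sFun_iff (by omega)).mp hv).2

theorem lie_mem_sFun_add (hbr : ∀ i j : ℤ, ∀ u ∈ g i, ∀ v ∈ g j, ⁅u, v⁆ ∈ g (i + j)) {i j : ℤ}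
    {u v : L} (hu : u ∈ sFun g x i) (hv : v ∈ sFun g x j) : ⁅u, v⁆ ∈ sFun g x (i + j) := by
  by_cases hi : i < -1
  · rw [sFun_of_lt_neg_one hi, Submodule.mem_bot] at hu
    simp [hu]
  by_cases hj : j < -1
  · rw [sFun_of_lt_neg_one hj, Submodule.mem_bot] at hv
    simp [hv]
  by_cases hi' : i = -1
  · subst hi'
    obtain ⟨a, rfl⟩ := mem_sFun_neg_one.mp hu
    rw [smul_lie, neg_add_eq_sub]
    exact Submodule.smul_mem _ a (lie_x_mem_sFun hv)
  by_cases hj' : j = -1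
  · subst hj'
    obtain ⟨b, rfl⟩ := mem_sFun_neg_one.mp hv
    rw [lie_smul, ← lie_skew, ← sub_eq_add_neg]
    exact Submodule.smul_mem _ b (Submodule.neg_mem _ (lie_x_mem_sFun hu))
  have hu' := (mem_sFun_iff (by omega)).mp hu
  have hv' := (mem_sFun_iff (by omega)).mp hv
  rw [mem_sFun_iff (by omega), leibniz_lie]
  refine ⟨hbr i j u hu'.1 v hv'.1, Submodule.add_mem _ ?_ ?_⟩
  · rw [show i + j - 1 = i - 1 + j by ring]
    exact lie_mem_sFun_add hbr hu'.2 hv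
  · rw [show i + j - 1 = i + (j - 1) by ring]
    exact lie_mem_sFun_add hbr hu hv'.2
termination_by (i + j + 2).toNat

theorem sFun_le_iSup_ge (i : ℤ) : sFun g x i ≤ ⨆ j ≥ (-1 : ℤ), sFun g x j := by
  by_cases hi : i < -1
  · simp [sFun_of_lt_neg_one hi]
  · exact fun u hu => Submodule.mem_iSup_ge_of_mem (by omega) hu

theorem iSup_sFun_le_comap_ad (hbr : ∀ i j : ℤ, ∀ u ∈ g i, ∀ v ∈ g j, ⁅u, v⁆ ∈ g (i + j))
    {z : L} (hz : z ∈ ⨆ i ≥ (-1 : ℤ), sFun g x i) :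
    (⨆ i ≥ (-1 : ℤ), sFun g x i) ≤ (⨆ i ≥ (-1 : ℤ), sFun g x i).comap (LieAlgebra.ad K L z) :=
  fun _ hv => lie_mem_of_forall_mem_iSup_ge
    (fun _ _ _ _ _ hu _ hv => sFun_le_iSup_ge _ (lie_mem_sFun_add hbr hu hv)) hz hv

theorem DirectSum.IsInternal.proj_mem_sFun (hg : DirectSum.IsInternal g) (hx : x ∈ g (-1))
    (i : ℤ) {s : L} (hs : s ∈ ⨆ j ≥ (-1 : ℤ), sFun g x j) : hg.proj i s ∈ sFun g x i := by
  suffices (⨆ j ≥ (-1 : ℤ), sFun g x j) ≤ (sFun g x i).comap (hg.proj i) from this hs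
  refine iSup₂_le fun j _ t ht => ?_
  rcases eq_or_ne j i with rfl | hji
  · rwa [Submodule.mem_comap, hg.proj_apply_of_mem (sFun_le hx j ht)]
  · rw [Submodule.mem_comap, hg.proj_apply_of_mem_ne hji (sFun_le hx j ht)]
    exact zero_mem _

variable {h y : L}

theorem h_mem_sFun_zero (hh : h ∈ g 0) (hhx : ⁅h, x⁆ = (-2 : K) • x) : h ∈ sFun g x 0 := by
  rw [mem_sFun_iff le_rfl, zero_sub, mem_sFun_neg_one]
  exact ⟨hh, 2, by rw [← lie_skew, hhx, neg_smul, neg_neg]⟩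

theorem y_mem_sFun_one (hh : h ∈ g 0) (hy : y ∈ g 1) (hhx : ⁅h, x⁆ = (-2 : K) • x)
    (hyx : ⁅y, x⁆ = h) : y ∈ sFun g x 1 := by
  rw [mem_sFun_iff zero_le_one, sub_self, ← lie_skew, hyx]
  exact ⟨hy, Submodule.neg_mem _ (h_mem_sFun_zero hh hhx)⟩

end SliceSpaces

section Nondegenerate

variable {K L : Type*} [Field K] [LieRing L] [LieAlgebra K L] {g : ℤ → Submodule K L} {x h y : L}
  (hg : DirectSum.IsInternal g) (hfin : {i | g i ≠ ⊥}.Finite)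
  (hbr : ∀ i j : ℤ, ∀ u ∈ g i, ∀ v ∈ g j, ⁅u, v⁆ ∈ g (i + j)) (hx : x ∈ g (-1))
  (hnd : ∀ u ∈ ⨆ i ≥ (-1 : ℤ), sFun g x i,
    (∀ v ∈ ⨆ i ≥ (-1 : ℤ), sFun g x i, killingForm K L u v = 0) → u = 0)
include hg hfin hbr hx hnd

theorem eq_zero_of_mem_sFun_of_killingForm_eq_zero {i : ℤ} (hi : 1 ≤ i) {s : L}
    (hs : s ∈ sFun g x i) (hsx : killingForm K L s x = 0) : s = 0 := by
  refine hnd s (Submodule.mem_iSup_ge_of_mem (by omega) hs) fun v hv => ?_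
  suffices (⨆ j ≥ (-1 : ℤ), sFun g x j) ≤ LinearMap.ker (killingForm K L s) from this hv
  refine iSup₂_le fun j hj t ht => ?_
  rcases hj.eq_or_lt with rfl | hj
  · obtain ⟨a, rfl⟩ := mem_sFun_neg_one.mp ht
    simp [hsx]
  · exact killingForm_eq_zero_of_add_ne_zero hg hfin hbr (by omega) (sFun_le hx i hs)
      (sFun_le hx j ht)

theorem sFun_le_span_y [CharZero K] (hh : h ∈ g 0) (hy : y ∈ g 1) (hhx : ⁅h, x⁆ = (-2 : K) • x)
    (hyx : ⁅y, x⁆ = h) {i : ℤ} (hi : 1 ≤ i) : sFun g x i ≤ K ∙ y := by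
  intro s hs
  have hy1 := y_mem_sFun_one hh hy hhx hyx
  have hvanish : ∀ {j : ℤ}, 1 ≤ j → ∀ {t : L}, t ∈ sFun g x j → killingForm K L t x = 0 → t = 0 :=
    eq_zero_of_mem_sFun_of_killingForm_eq_zero hg hfin hbr hx hnd
  rcases hi.eq_or_lt with rfl | hi
  · by_cases hyx0 : killingForm K L y x = 0
    · have hy0 : y = 0 := hvanish le_rfl hy1 hyx0
      have hx0 : x = 0 := by
        have : (-2 : K) • x = 0 := by rw [← hhx, ← hyx, hy0, zero_lie, zero_lie]
        simpa using this
      rw [hvanish le_rfl hs (by rw [hx0, map_zero])]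
      exact zero_mem _
    · set c := killingForm K L s x / killingForm K L y x
      have hsc : c • y - s = 0 := hvanish le_rfl (sub_mem (Submodule.smul_mem _ c hy1) hs)
        (by simp [c, div_mul_cancel₀ _ hyx0])
      exact Submodule.mem_span_singleton.mpr ⟨c, sub_eq_zero.mp hsc⟩
  · rw [hvanish hi.le hs (killingForm_eq_zero_of_add_ne_zero hg hfin hbr (by omega)
      (sFun_le hx _ hs) hx)]
    exact zero_mem _

theorem lie_y_mem_span_of_mem_iSup_ge [CharZero K] (hh : h ∈ g 0) (hy : y ∈ g 1)
    (hhx : ⁅h, x⁆ = (-2 : K) • x) (hyx : ⁅y, x⁆ = h) {u : L}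
    (hu : u ∈ ⨆ i ≥ (0 : ℤ), sFun g x i) : ⁅y, u⁆ ∈ K ∙ y := by
  suffices (⨆ i ≥ (0 : ℤ), sFun g x i) ≤ (K ∙ y).comap (LieAlgebra.ad K L y) from this hu
  exact iSup₂_le fun i hi u hu => sFun_le_span_y hg hfin hbr hx hnd hh hy hhx hyx
    (by omega : 1 ≤ 1 + i) (lie_mem_sFun_add hbr (y_mem_sFun_one hh hy hhx hyx) hu)

end Nondegenerate

section Complements

variable {K V : Type*} [Field K] [AddCommGroup V] [Module K V]

theorem isCompl_perpOf [FiniteDimensional K V] {B : LinearMap.BilinForm K V} (hB : B.IsSymm)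
    {S : Submodule K V} (hnd : ∀ u ∈ S, (∀ v ∈ S, B u v = 0) → u = 0) :
    IsCompl S (perpOf B S) := by
  have hperp : perpOf B S = B.orthogonal S := by
    ext u
    exact ⟨fun hu s hs => (hB.eq s u).trans (hu s hs), fun hu s hs => (hB.eq u s).trans (hu s hs)⟩
  have hsep : (B.restrict S).SeparatingLeft := fun u hu =>
    Subtype.ext (hnd u u.2 fun v hv => hu ⟨v, hv⟩)
  rw [hperp]
  exact B.isCompl_orthogonal_of_restrict_nondegenerate hB.isRefl
    ((LinearMap.IsRefl.nondegenerate_iff_separatingLeft (hB.isRefl.domRestrict S)).mpr hsep)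

theorem le_inf_ker_sup_map_of_isCompl {S P : Submodule K V} {E F : Module.End K V}
    (hSP : IsCompl S P) (hES : S ≤ S.comap E) (hEP : P ≤ P.comap E) (hFS : S ≤ S.comap F)
    (hFP : P ≤ P.comap F) (hEF : LinearMap.ker E ⊔ LinearMap.range F = ⊤) :
    P ≤ P ⊓ LinearMap.ker E ⊔ P.map F := by
  have hdisj := Submodule.disjoint_def.mp hSP.disjoint
  intro m hm
  obtain ⟨k, hk, _, ⟨z, rfl⟩, rfl⟩ := Submodule.mem_sup.mp (hEF ▸ Submodule.mem_top (x := m))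
  obtain ⟨σ, hσ, k', hk', rfl⟩ := Submodule.mem_sup.mp (hSP.sup_eq_top ▸ Submodule.mem_top (x := k))
  obtain ⟨τ, hτ, z', hz', rfl⟩ := Submodule.mem_sup.mp (hSP.sup_eq_top ▸ Submodule.mem_top (x := z))
  have hSpart : σ + F τ = 0 := by
    refine hdisj _ (add_mem hσ (hFS hτ)) ?_
    convert sub_mem (sub_mem hm hk') (hFP hz') using 1
    rw [map_add]
    abel
  have hEk' : E k' = 0 := by
    have hsum : E σ + E k' = 0 := by rw [← map_add]; exact hk
    rw [hdisj _ (hES hσ) (by rw [eq_neg_of_add_eq_zero_left hsum]; exact neg_mem (hEP hk')),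
      zero_add] at hsum
    exact hsum
  have hm_eq : σ + k' + F (τ + z') = k' + F z' := by
    rw [map_add, add_add_add_comm, hSpart, zero_add, add_comm]
  rw [hm_eq]
  exact Submodule.add_mem_sup ⟨hk', hEk'⟩ (Submodule.mem_map_of_mem hz')

theorem disjoint_inf_ker_sup_range {S P : Submodule K V} {E F : Module.End K V}
    (hSP : IsCompl S P) (hES : S ≤ S.comap E) (hEP : P ≤ P.comap E) (hFS : S ≤ S.comap F)
    (hFP : P ≤ P.comap F) (hEF : IsCompl (LinearMap.ker E) (LinearMap.range F)) :
    Disjoint (P ⊓ LinearMap.ker E) (S ⊔ LinearMap.range F) := by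
  refine Submodule.disjoint_def.mpr fun v ⟨hvP, hvE⟩ hv => ?_
  obtain ⟨t, ht, _, ⟨z, rfl⟩, rfl⟩ := Submodule.mem_sup.mp hv
  obtain ⟨k, ⟨hkS, hkE⟩, _, ⟨σ, -, rfl⟩, rfl⟩ := Submodule.mem_sup.mp
    (le_inf_ker_sup_map_of_isCompl hSP.symm hEP hES hFP hFS hEF.sup_eq_top ht)
  have hEv : E (k + F σ + F z) = 0 := hvE
  have hEk : E k = 0 := hkE
  rw [add_assoc, map_add, hEk, zero_add] at hEv
  have hw : F σ + F z = 0 :=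
    Submodule.disjoint_def.mp hEF.disjoint _ hEv ⟨σ + z, map_add F σ z⟩
  rw [add_assoc, hw, add_zero] at hvP ⊢
  exact Submodule.disjoint_def.mp hSP.disjoint k hkS hvP

end Complements

section KillingOrthogonal

variable {K L : Type*} [Field K] [LieRing L] [LieAlgebra K L]

theorem ad_mem_of_mem {g : ℤ → Submodule K L}
    (hbr : ∀ i j : ℤ, ∀ u ∈ g i, ∀ v ∈ g j, ⁅u, v⁆ ∈ g (i + j)) {a : L} {k : ℤ} (ha : a ∈ g k)
    (i : ℤ) (u : L) (hu : u ∈ g i) : LieAlgebra.ad K L a u ∈ g (i + k) := by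
  simpa [add_comm] using hbr k i a ha u hu

theorem perpOf_killingForm_le_comap_ad {S : Submodule K L} {z : L}
    (hz : S ≤ S.comap (LieAlgebra.ad K L z)) :
    perpOf (killingForm K L) S ≤ (perpOf (killingForm K L) S).comap (LieAlgebra.ad K L z) := by
  intro m hm s hs
  change killingForm K L ⁅z, m⁆ s = 0
  rw [← lie_skew, map_neg, LinearMap.neg_apply, neg_eq_zero, LieModule.traceForm_apply_lie_apply]
  exact hm _ (hz hs)

theorem DirectSum.IsInternal.proj_mem_perpOf_killingForm {g : ℤ → Submodule K L}
    (hg : DirectSum.IsInternal g) (hfin : {i | g i ≠ ⊥}.Finite)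
    (hbr : ∀ i j : ℤ, ∀ u ∈ g i, ∀ v ∈ g j, ⁅u, v⁆ ∈ g (i + j)) {S : Submodule K L}
    (hS : ∀ j, S ≤ S.comap (hg.proj j)) (j : ℤ) {m : L} (hm : m ∈ perpOf (killingForm K L) S) :
    hg.proj j m ∈ perpOf (killingForm K L) S :=
  fun s hs => (killingForm_proj_apply hg hfin hbr j m s).trans (hm _ (hS (-j) hs))

theorem kerRight_eq_ker_ad (y : L) : kerRight y = LinearMap.ker (LieAlgebra.ad K L y) := by
  ext u
  change ⁅u, y⁆ = 0 ↔ ⁅y, u⁆ = 0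
  rw [← lie_skew, neg_eq_zero]

theorem perpOf_inf_inf_kerRight_inf_sup_map_eq_bot {x y : L} {S T Q Q' : Submodule K L}
    (hSP : IsCompl S (perpOf (killingForm K L) S))
    (hEF : IsCompl (LinearMap.ker (LieAlgebra.ad K L y)) (LinearMap.range (LieAlgebra.ad K L x)))
    (hSx : S ≤ S.comap (LieAlgebra.ad K L x)) (hSy : S ≤ S.comap (LieAlgebra.ad K L y))
    (hT : T ≤ S) :
    perpOf (killingForm K L) S ⊓ Q ⊓ kerRight y ⊓ (T ⊔ Q'.map (LieAlgebra.ad K L x)) = ⊥ := by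
  rw [← disjoint_iff, kerRight_eq_ker_ad]
  refine (disjoint_inf_ker_sup_range hSP hSy (perpOf_killingForm_le_comap_ad hSy)
    hSx (perpOf_killingForm_le_comap_ad hSx) hEF).mono
    (inf_le_inf_right _ inf_le_left) (sup_le_sup hT LinearMap.map_le_range)

end KillingOrthogonal

section GradedSl2

variable {K L : Type*} [Field K] [LieRing L] [LieAlgebra K L] {g : ℤ → Submodule K L} {x h y : L}
  (hg : DirectSum.IsInternal g) (hfin : {i | g i ≠ ⊥}.Finite)
  (hbr : ∀ i j : ℤ, ∀ u ∈ g i, ∀ v ∈ g j, ⁅u, v⁆ ∈ g (i + j))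
  (hx : x ∈ g (-1)) (hh : h ∈ g 0) (hy : y ∈ g 1)
  (hhx : ⁅h, x⁆ = (-2 : K) • x) (hhy : ⁅h, y⁆ = (2 : K) • y) (hyx : ⁅y, x⁆ = h)

include hg hfin hbr hx hy hhx hhy hyx in
theorem isCompl_ker_ad_range_ad [CharZero K] [FiniteDimensional K L] :
    IsCompl (LinearMap.ker (LieAlgebra.ad K L y)) (LinearMap.range (LieAlgebra.ad K L x)) := by
  have hcomm (a b : L) : LieAlgebra.ad K L a * LieAlgebra.ad K L b -
      LieAlgebra.ad K L b * LieAlgebra.ad K L a = LieAlgebra.ad K L ⁅a, b⁆ := by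
    ext u
    simp only [LinearMap.sub_apply, Module.End.mul_apply, LieAlgebra.ad_apply, lie_lie]
  refine sl2_isCompl_ker_range (h := LieAlgebra.ad K L h) ?_ ?_ ?_ ?_ ?_
  · rw [hcomm, hyx]
  · rw [hcomm, hhy, map_smul]
  · rw [hcomm, hhx, map_smul]
  · exact hg.isNilpotent_of_mapsTo_add hfin one_ne_zero (ad_mem_of_mem hbr hy)
  · exact hg.isNilpotent_of_mapsTo_add hfin (by norm_num) (ad_mem_of_mem hbr hx)

include hg hfin hbr hx hy in
theorem perpOf_inf_inf_kerRight_sup_eq_iSup_ge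
    (hSP : IsCompl (⨆ i ≥ (-1 : ℤ), sFun g x i)
      (perpOf (killingForm K L) (⨆ i ≥ (-1 : ℤ), sFun g x i)))
    (hEF : IsCompl (LinearMap.ker (LieAlgebra.ad K L y)) (LinearMap.range (LieAlgebra.ad K L x)))
    (hSx : (⨆ i ≥ (-1 : ℤ), sFun g x i) ≤
      (⨆ i ≥ (-1 : ℤ), sFun g x i).comap (LieAlgebra.ad K L x))
    (hSy : (⨆ i ≥ (-1 : ℤ), sFun g x i) ≤
      (⨆ i ≥ (-1 : ℤ), sFun g x i).comap (LieAlgebra.ad K L y)) :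
    (perpOf (killingForm K L) (⨆ i ≥ (-1 : ℤ), sFun g x i) ⊓ (⨆ i ≥ (0 : ℤ), g i) ⊓ kerRight y)
        ⊔ ((⨆ i ≥ (0 : ℤ), sFun g x i) ⊔
            Submodule.map (LieAlgebra.ad K L x) (⨆ i ≥ (1 : ℤ), g i)) =
      ⨆ i ≥ (0 : ℤ), g i := by
  set S := ⨆ i ≥ (-1 : ℤ), sFun g x i
  set P := perpOf (killingForm K L) S
  have hdecomp :
      S ⊔ (P ⊓ LinearMap.ker (LieAlgebra.ad K L y) ⊔ P.map (LieAlgebra.ad K L x)) = ⊤ := by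
    refine eq_top_iff.mpr (hSP.sup_eq_top ▸ sup_le_sup_left ?_ S)
    exact le_inf_ker_sup_map_of_isCompl hSP hSy (perpOf_killingForm_le_comap_ad hSy)
      hSx (perpOf_killingForm_le_comap_ad hSx) hEF.sup_eq_top
  refine le_antisymm (sup_le (inf_le_left.trans inf_le_right) (sup_le ?_ ?_))
    (iSup₂_le fun i hi t ht => ?_)
  · exact iSup₂_mono fun i _ => sFun_le hx i
  · rw [Submodule.map_le_iff_le_comap]
    intro z hz
    simpa using lie_mem_iSup_ge hbr (Submodule.mem_iSup_ge_of_mem le_rfl hx) hz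
  obtain ⟨s, hs, _, hr, rfl⟩ := Submodule.mem_sup.mp (hdecomp ▸ Submodule.mem_top (x := t))
  obtain ⟨k, ⟨hkP, hkE⟩, _, ⟨z, -, rfl⟩, rfl⟩ := Submodule.mem_sup.mp hr
  have hEk : LieAlgebra.ad K L y (hg.proj i k) = 0 := by
    rw [← hg.proj_add_apply_of_mapsTo (ad_mem_of_mem hbr hy), LinearMap.mem_ker.mp hkE, map_zero]
  have hFz : hg.proj i (LieAlgebra.ad K L x z) = LieAlgebra.ad K L x (hg.proj (i + 1) z) := by
    simpa using hg.proj_add_apply_of_mapsTo (ad_mem_of_mem hbr hx) (i + 1) z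
  rw [← hg.proj_apply_of_mem ht, map_add, map_add, hFz]
  refine add_mem ?_ (add_mem ?_ ?_)
  · exact Submodule.mem_sup_right (Submodule.mem_sup_left
      (Submodule.mem_iSup_ge_of_mem hi (hg.proj_mem_sFun hx i hs)))
  · refine Submodule.mem_sup_left ⟨⟨?_, Submodule.mem_iSup_ge_of_mem hi (hg.proj_mem i k)⟩, ?_⟩
    · exact hg.proj_mem_perpOf_killingForm hfin hbr
        (fun j s hs => sFun_le_iSup_ge j (hg.proj_mem_sFun hx j hs)) i hkP
    · rw [SetLike.mem_coe, kerRight_eq_ker_ad]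
      exact hEk
  · exact Submodule.mem_sup_right (Submodule.mem_sup_right (Submodule.mem_map_of_mem
      (Submodule.mem_iSup_ge_of_mem (by omega) (hg.proj_mem _ z))))

include hg hfin hbr hx hh hy hhx hyx in
theorem lie_mem_perpOf_inf_inf_kerRight [CharZero K]
    (hnd : ∀ u ∈ ⨆ i ≥ (-1 : ℤ), sFun g x i,
      (∀ v ∈ ⨆ i ≥ (-1 : ℤ), sFun g x i, killingForm K L u v = 0) → u = 0)
    {u w : L} (hu : u ∈ ⨆ i ≥ (0 : ℤ), sFun g x i)
    (hw : w ∈ perpOf (killingForm K L) (⨆ i ≥ (-1 : ℤ), sFun g x i) ⊓ (⨆ i ≥ (0 : ℤ), g i)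
      ⊓ kerRight y) :
    ⁅u, w⁆ ∈ perpOf (killingForm K L) (⨆ i ≥ (-1 : ℤ), sFun g x i) ⊓ (⨆ i ≥ (0 : ℤ), g i)
      ⊓ kerRight y := by
  obtain ⟨⟨hwP, hwp⟩, hwy⟩ := hw
  have hwy' : ⁅w, y⁆ = 0 := hwy
  obtain ⟨c, hc⟩ := Submodule.mem_span_singleton.mp
    (lie_y_mem_span_of_mem_iSup_ge hg hfin hbr hx hnd hh hy hhx hyx hu)
  have huS : u ∈ ⨆ i ≥ (-1 : ℤ), sFun g x i :=
    iSup_ge_le_iSup_ge (p := sFun g x) (by norm_num : (-1 : ℤ) ≤ 0) hu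
  refine ⟨⟨perpOf_killingForm_le_comap_ad (iSup_sFun_le_comap_ad hbr huS) hwP, ?_⟩, ?_⟩
  · simpa using lie_mem_iSup_ge hbr (iSup₂_mono (fun i _ => sFun_le hx i) hu) hwp
  · show ⁅⁅u, w⁆, y⁆ = 0
    have huy : ⁅u, y⁆ = -(c • y) := by rw [hc, lie_skew]
    rw [lie_lie, hwy', lie_zero, zero_sub, huy, lie_neg, lie_smul, hwy', smul_zero, neg_zero,
      neg_zero]

end GradedSl2

theorem stmt2_general {K L : Type*} [Field K] [CharZero K] [LieRing L] [LieAlgebra K L]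
    [FiniteDimensional K L]
    (g : ℤ → Submodule K L)
    (hdsum : DirectSum.IsInternal g)
    (hfin : {i : ℤ | g i ≠ ⊥}.Finite)
    (hbr : ∀ i j : ℤ, ∀ u ∈ g i, ∀ v ∈ g j, ⁅u, v⁆ ∈ g (i + j))
    -- the graded `sl₂`-triple `(x, h, y)`:
    (x h y : L) (hx : x ∈ g (-1)) (hh : h ∈ g 0) (hy : y ∈ g 1)
    (hhx : ⁅h, x⁆ = (-2 : K) • x) (hhy : ⁅h, y⁆ = (2 : K) • y) (hyx : ⁅y, x⁆ = h)
    -- the restriction of the Killing form to `𝔰 = Σ_{i ≥ -1} 𝔰_i` is nondegenerate: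
    (hnd : ∀ u ∈ ⨆ i ≥ (-1 : ℤ), sFun g x i,
      (∀ v ∈ ⨆ i ≥ (-1 : ℤ), sFun g x i, killingForm K L u v = 0) → u = 0) :
    -- `𝔭` is the internal direct sum of `W` and `𝔰⁽⁰⁾ + ⁅x, 𝔤₊⁆`, and `W` is
    -- `𝔰⁽⁰⁾`-invariant, where `W := {u ∈ 𝔰^⊥ ∩ 𝔭 : ⁅u, y⁆ = 0}`.
    (perpOf (killingForm K L) (⨆ i ≥ (-1 : ℤ), sFun g x i) ⊓ (⨆ i ≥ (0 : ℤ), g i) ⊓ kerRight y)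
        ⊓ ((⨆ i ≥ (0 : ℤ), sFun g x i) ⊔
            Submodule.map (LieAlgebra.ad K L x) (⨆ i ≥ (1 : ℤ), g i)) = ⊥ ∧
    (perpOf (killingForm K L) (⨆ i ≥ (-1 : ℤ), sFun g x i) ⊓ (⨆ i ≥ (0 : ℤ), g i) ⊓ kerRight y)
        ⊔ ((⨆ i ≥ (0 : ℤ), sFun g x i) ⊔
            Submodule.map (LieAlgebra.ad K L x) (⨆ i ≥ (1 : ℤ), g i)) =
      (⨆ i ≥ (0 : ℤ), g i) ∧
    (∀ u ∈ ⨆ i ≥ (0 : ℤ), sFun g x i,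
      ∀ w ∈ perpOf (killingForm K L) (⨆ i ≥ (-1 : ℤ), sFun g x i) ⊓ (⨆ i ≥ (0 : ℤ), g i)
          ⊓ kerRight y,
      ⁅u, w⁆ ∈ perpOf (killingForm K L) (⨆ i ≥ (-1 : ℤ), sFun g x i) ⊓ (⨆ i ≥ (0 : ℤ), g i)
          ⊓ kerRight y) := by
  have hxS : x ∈ ⨆ i ≥ (-1 : ℤ), sFun g x i :=
    sFun_le_iSup_ge (-1) (mem_sFun_neg_one.mpr ⟨1, one_smul K x⟩)
  have hyS : y ∈ ⨆ i ≥ (-1 : ℤ), sFun g x i := sFun_le_iSup_ge 1 (y_mem_sFun_one hh hy hhx hyx)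
  have hSx := iSup_sFun_le_comap_ad hbr hxS
  have hSy := iSup_sFun_le_comap_ad hbr hyS
  have hSP :=
    isCompl_perpOf (LinearMap.BilinForm.isSymm_iff.mpr (LieModule.traceForm_isSymm K L L)) hnd
  have hEF := isCompl_ker_ad_range_ad hdsum hfin hbr hx hy hhx hhy hyx
  refine ⟨perpOf_inf_inf_kerRight_inf_sup_map_eq_bot hSP hEF hSx hSy
      (iSup_ge_le_iSup_ge (by norm_num)), ?_, ?_⟩
  · exact perpOf_inf_inf_kerRight_sup_eq_iSup_ge hdsum hfin hbr hx hy hSP hEF hSx hSy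
  · exact fun u hu w hw =>
      lie_mem_perpOf_inf_inf_kerRight hdsum hfin hbr hx hh hy hhx hyx hnd hu hw

theorem stmt2 {K L : Type*} [Field K] [CharZero K] [LieRing L] [LieAlgebra K L]
    [FiniteDimensional K L] [LieAlgebra.IsSemisimple K L]
    (g : ℤ → Submodule K L)
    (hdsum : DirectSum.IsInternal g)
    (hfin : {i : ℤ | g i ≠ ⊥}.Finite)
    (hbr : ∀ i j : ℤ, ∀ u ∈ g i, ∀ v ∈ g j, ⁅u, v⁆ ∈ g (i + j))
    -- the graded `sl₂`-triple `(x, h, y)`: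
    (x h y : L) (hx : x ∈ g (-1)) (hh : h ∈ g 0) (hy : y ∈ g 1)
    (hhx : ⁅h, x⁆ = (-2 : K) • x) (hhy : ⁅h, y⁆ = (2 : K) • y) (hyx : ⁅y, x⁆ = h)
    -- the restriction of the Killing form to `𝔰 = Σ_{i ≥ -1} 𝔰_i` is nondegenerate:
    (hnd : ∀ u ∈ ⨆ i ≥ (-1 : ℤ), sFun g x i,
      (∀ v ∈ ⨆ i ≥ (-1 : ℤ), sFun g x i, killingForm K L u v = 0) → u = 0) :
    -- `𝔭` is the internal direct sum of `W` and `𝔰⁽⁰⁾ + ⁅x, 𝔤₊⁆`, and `W` is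
    -- `𝔰⁽⁰⁾`-invariant, where `W := {u ∈ 𝔰^⊥ ∩ 𝔭 : ⁅u, y⁆ = 0}`.
    (perpOf (killingForm K L) (⨆ i ≥ (-1 : ℤ), sFun g x i) ⊓ (⨆ i ≥ (0 : ℤ), g i) ⊓ kerRight y)
        ⊓ ((⨆ i ≥ (0 : ℤ), sFun g x i) ⊔
            Submodule.map (LieAlgebra.ad K L x) (⨆ i ≥ (1 : ℤ), g i)) = ⊥ ∧
    (perpOf (killingForm K L) (⨆ i ≥ (-1 : ℤ), sFun g x i) ⊓ (⨆ i ≥ (0 : ℤ), g i) ⊓ kerRight y)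
        ⊔ ((⨆ i ≥ (0 : ℤ), sFun g x i) ⊔
            Submodule.map (LieAlgebra.ad K L x) (⨆ i ≥ (1 : ℤ), g i)) =
      (⨆ i ≥ (0 : ℤ), g i) ∧
    (∀ u ∈ ⨆ i ≥ (0 : ℤ), sFun g x i,
      ∀ w ∈ perpOf (killingForm K L) (⨆ i ≥ (-1 : ℤ), sFun g x i) ⊓ (⨆ i ≥ (0 : ℤ), g i)
          ⊓ kerRight y,
      ⁅u, w⁆ ∈ perpOf (killingForm K L) (⨆ i ≥ (-1 : ℤ), sFun g x i) ⊓ (⨆ i ≥ (0 : ℤ), g i)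
          ⊓ kerRight y) :=
  stmt2_general g hdsum hfin hbr x h y hx hh hy hhx hhy hyx hnd
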